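/- arXiv:2202.04706 — 6 statements merged into one kernel-verified Lean document; each statement's English description precedes it below -/
import Mathlib

section
/- In an economy with dichotomous item preferences, the matrix rounding property holds: if B is an |A| × |O| matrix with entries in [0,1] such that each row i sums to at least t_i (where t_i ≥ 1 is an integer) and each column sums to at most 1, then there exists a 0-1 matrix B' with the same dimensions such that each row i of B' has at least t_i ones and each column of B' sums to at most 1. -/
/-- matrix rounding property for dichotomous economies. -/
theorem matrix_rounding {A O : Type} [Fintype A] [Fintype O] [DecidableEq A] [DecidableEq O]
    (B : A → O → ℝ) (t : A → ℕ)
    (ht : ∀ i, 1 ≤ t i)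
    (hB01 : ∀ i j, 0 ≤ B i j ∧ B i j ≤ 1)
    (hrow : ∀ i, (t i : ℝ) ≤ ∑ j, B i j)
    (hcol : ∀ j, ∑ i, B i j ≤ 1) :
    ∃ B' : A → O → ℝ,
      (∀ i j, B' i j = 0 ∨ B' i j = 1) ∧
      (∀ i, t i ≤ (Finset.univ.filter (fun j => B' i j = 1)).card) ∧
      (∀ j, ∑ i, B' i j ≤ 1) := by
  classical
  -- total demand is at most the number of objects
  have hsum : ∑ i, t i ≤ Fintype.card O := by
    have h1 : ((∑ i, t i : ℕ) : ℝ) ≤ ∑ i, ∑ j, B i j := by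
      push_cast
      exact Finset.sum_le_sum fun i _ => hrow i
    have h2 : ∑ i, ∑ j, B i j ≤ (Fintype.card O : ℝ) := by
      rw [Finset.sum_comm]
      calc ∑ j : O, ∑ i, B i j ≤ ∑ j : O, (1 : ℝ) :=
            Finset.sum_le_sum fun j _ => hcol j
        _ = (Fintype.card O : ℝ) := by simp
    exact_mod_cast h1.trans h2
  have hcard : Fintype.card (Σ i : A, Fin (t i)) ≤ Fintype.card O := by
    simpa using hsum
  obtain ⟨f⟩ := Function.Embedding.nonempty_of_card_le hcard
  refine ⟨fun i j => if ∃ k : Fin (t i), f ⟨i, k⟩ = j then 1 else 0, ?_, ?_, ?_⟩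
  · intro i j; by_cases h : ∃ k : Fin (t i), f ⟨i, k⟩ = j <;> simp [h]
  · intro i
    have hinj : Function.Injective (fun k : Fin (t i) => f ⟨i, k⟩) := by
      intro k k' h
      have := f.injective h
      simpa using this
    have himg : (Finset.univ.image (fun k : Fin (t i) => f ⟨i, k⟩)).card = t i := by
      rw [Finset.card_image_of_injective _ hinj]; simp
    have hsub : (Finset.univ.image (fun k : Fin (t i) => f ⟨i, k⟩)) ⊆
        Finset.univ.filter (fun j => (if ∃ k : Fin (t i), f ⟨i, k⟩ = j then (1:ℝ) else 0) = 1) := by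
      intro j hj
      simp only [Finset.mem_image] at hj
      obtain ⟨k, _, hk⟩ := hj
      simp only [Finset.mem_filter, Finset.mem_univ, true_and]
      rw [if_pos ⟨k, hk⟩]
    calc t i = _ := himg.symm
      _ ≤ _ := Finset.card_le_card hsub
  · intro j
    rcases em (∃ p : Σ i : A, Fin (t i), f p = j) with ⟨⟨i0, k0⟩, hp⟩ | hnp
    · have : ∀ i, (if ∃ k : Fin (t i), f ⟨i, k⟩ = j then (1:ℝ) else 0) =
          if i = i0 then 1 else 0 := by
        intro i
        by_cases hi : i = i0
        · subst hi; simp only [if_pos rfl]; exact if_pos ⟨k0, hp⟩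
        · have : ¬ ∃ k : Fin (t i), f ⟨i, k⟩ = j := by
            rintro ⟨k, hk⟩
            have := f.injective (hk.trans hp.symm)
            exact hi (congrArg Sigma.fst this)
          simp [hi, this]
      simp [this]
    · have : ∀ i, (if ∃ k : Fin (t i), f ⟨i, k⟩ = j then (1:ℝ) else 0) = 0 := by
        intro i
        have : ¬ ∃ k : Fin (t i), f ⟨i, k⟩ = j := fun ⟨k, hk⟩ => hnp ⟨⟨i, k⟩, hk⟩
        simp [this]
      simp [this]
end

section
/- The NTU game induced by an economy with dichotomous item preferences is balanced: for every balanced collection of coalitions 𝒮 with weights δ_S ≥ 0 satisfying ∑_{S∋i} δ_S = 1 for all i, and every utility vector u with u ∈ V(S) for all S ∈ 𝒮, we have u ∈ V(A). -/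
def IsSAlloc {A O : Type} [DecidableEq O] (ω X : A → Finset O) (S : Finset A) : Prop :=
  (∀ i ∈ S, ∀ j ∈ S, i ≠ j → Disjoint (X i) (X j)) ∧ S.biUnion X ⊆ S.biUnion ω

/-- `u ∈ V(S)`: some `S`-allocation gives each member of `S` utility at least `u i`. -/
def memV {A O : Type} [DecidableEq O] (ω : A → Finset O) (v : A → Finset O → ℝ)
    (S : Finset A) (u : A → ℝ) : Prop :=
  ∃ X : A → Finset O, IsSAlloc ω X S ∧ ∀ i ∈ S, u i ≤ v i (X i)

/-- the NTU game induced by an economy with dichotomous item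
preferences is balanced. -/
theorem dichotomous_balanced {A O : Type} [Fintype A] [Fintype O]
    [DecidableEq A] [DecidableEq O]
    (ω : A → Finset O) (G : A → Finset O)
    (v : A → Finset O → ℝ)
    (hv : ∀ i X, v i X = ((X ∩ G i).card : ℝ))
    (hne : ∀ i, (ω i).Nonempty)
    (hdisj : ∀ i j, i ≠ j → Disjoint (ω i) (ω j))
    (hcover : Finset.univ.biUnion ω = (Finset.univ : Finset O))
    (𝒮 : Finset (Finset A)) (δ : Finset A → ℝ)
    (hSne : ∀ S ∈ 𝒮, S.Nonempty)
    (hδ : ∀ S ∈ 𝒮, 0 ≤ δ S)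
    (hbal : ∀ i : A, ∑ S ∈ 𝒮.filter (fun S => i ∈ S), δ S = 1)
    (u : A → ℝ)
    (hu : ∀ S ∈ 𝒮, memV ω v S u) :
    memV ω v Finset.univ u := by
  classical
  -- choose allocations for each coalition
  have hu' : ∀ S : Finset A, ∃ X : A → Finset O,
      S ∈ 𝒮 → (IsSAlloc ω X S ∧ ∀ i ∈ S, u i ≤ v i (X i)) := by
    intro S
    by_cases h : S ∈ 𝒮
    · obtain ⟨X, h1, h2⟩ := hu S h
      exact ⟨X, fun _ => ⟨h1, h2⟩⟩
    · exact ⟨fun _ => ∅, fun h' => absurd h' h⟩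
  choose X hX using hu'
  -- integer demands
  set m : A → ℕ := fun i => (⌈u i⌉).toNat with hm
  have hum : ∀ i, u i ≤ (m i : ℝ) := by
    intro i
    refine (Int.le_ceil (u i)).trans ?_
    exact_mod_cast Int.self_le_toNat _
  have hmcard : ∀ S ∈ 𝒮, ∀ i ∈ S, m i ≤ ((X S) i ∩ G i).card := by
    intro S hS i hi
    have h2 := (hX S hS).2 i hi
    rw [hv] at h2
    have h3 : ⌈u i⌉ ≤ ((((X S) i ∩ G i).card : ℤ)) := Int.ceil_le.mpr (by exact_mod_cast h2)
    exact Int.toNat_le.mpr h3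
  -- the owner of each object
  have howner : ∀ o : O, ∃ j, o ∈ ω j := by
    intro o
    have : o ∈ Finset.univ.biUnion ω := by rw [hcover]; exact Finset.mem_univ o
    simpa using this
  choose owner howner' using howner
  have howner_unique : ∀ o j, o ∈ ω j → j = owner o := by
    intro o j h
    by_contra hne'
    exact Finset.disjoint_left.mp (hdisj j (owner o) hne') h (howner' o)
  -- Hall condition
  have key : ∀ T : Finset A, ∑ i ∈ T, m i ≤ (T.biUnion G).card := by
    intro T
    set U := T.biUnion G with hU
    have hreal : (∑ i ∈ T, (m i : ℝ)) ≤ (U.card : ℝ) := by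
      calc ∑ i ∈ T, (m i : ℝ)
          = ∑ i ∈ T, ∑ S ∈ 𝒮, (if i ∈ S then δ S * (m i : ℝ) else 0) := by
            refine Finset.sum_congr rfl fun i _ => ?_
            rw [← Finset.sum_filter, ← Finset.sum_mul, hbal i, one_mul]
        _ ≤ ∑ i ∈ T, ∑ S ∈ 𝒮, (if i ∈ S then δ S * (((X S) i ∩ U).card : ℝ) else 0) := by
            refine Finset.sum_le_sum fun i hi => Finset.sum_le_sum fun S hS => ?_
            by_cases h : i ∈ S
            · simp only [h, if_true]
              refine mul_le_mul_of_nonneg_left ?_ (hδ S hS)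
              have h1 : (m i : ℝ) ≤ (((X S) i ∩ G i).card : ℝ) := by
                exact_mod_cast hmcard S hS i h
              refine h1.trans ?_
              have hsub : (X S) i ∩ G i ⊆ (X S) i ∩ U :=
                Finset.inter_subset_inter le_rfl (Finset.subset_biUnion_of_mem G hi)
              exact_mod_cast Finset.card_le_card hsub
            · simp [h]
        _ = ∑ S ∈ 𝒮, ∑ i ∈ T, (if i ∈ S then δ S * (((X S) i ∩ U).card : ℝ) else 0) :=
            Finset.sum_comm
        _ ≤ ∑ S ∈ 𝒮, δ S * ((U.filter (fun o => owner o ∈ S)).card : ℝ) := by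
            refine Finset.sum_le_sum fun S hS => ?_
            rw [← Finset.sum_filter, ← Finset.mul_sum]
            refine mul_le_mul_of_nonneg_left ?_ (hδ S hS)
            have hd : ∀ i ∈ T.filter (fun i => i ∈ S), ∀ j ∈ T.filter (fun i => i ∈ S),
                i ≠ j → Disjoint ((X S) i ∩ U) ((X S) j ∩ U) := by
              intro i hi j hj hij
              have hi' := (Finset.mem_filter.mp hi).2
              have hj' := (Finset.mem_filter.mp hj).2
              exact ((hX S hS).1.1 i hi' j hj' hij).mono
                Finset.inter_subset_left Finset.inter_subset_left
            have hcardsum : ∑ i ∈ T.filter (fun i => i ∈ S), ((X S) i ∩ U).card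
                = ((T.filter (fun i => i ∈ S)).biUnion (fun i => (X S) i ∩ U)).card :=
              (Finset.card_biUnion hd).symm
            have hsub : (T.filter (fun i => i ∈ S)).biUnion (fun i => (X S) i ∩ U)
                ⊆ U.filter (fun o => owner o ∈ S) := by
              intro o ho
              obtain ⟨i, hi, hoi⟩ := Finset.mem_biUnion.mp ho
              have hi' := (Finset.mem_filter.mp hi).2
              obtain ⟨ho1, ho2⟩ := Finset.mem_inter.mp hoi
              have hoS : o ∈ S.biUnion ω := (hX S hS).1.2 (Finset.mem_biUnion.mpr ⟨i, hi', ho1⟩)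
              obtain ⟨j, hj, hoj⟩ := Finset.mem_biUnion.mp hoS
              refine Finset.mem_filter.mpr ⟨ho2, ?_⟩
              rwa [← howner_unique o j hoj]
            calc (∑ i ∈ T.filter (fun i => i ∈ S), (((X S) i ∩ U).card : ℝ))
                = ((∑ i ∈ T.filter (fun i => i ∈ S), ((X S) i ∩ U).card : ℕ) : ℝ) := by
                  push_cast; ring
              _ ≤ (((U.filter (fun o => owner o ∈ S)).card : ℕ) : ℝ) := by
                  exact_mod_cast (hcardsum ▸ Finset.card_le_card hsub)
        _ = ∑ S ∈ 𝒮, ∑ o ∈ U, (if owner o ∈ S then δ S else 0) := by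
            refine Finset.sum_congr rfl fun S _ => ?_
            rw [Finset.card_filter]
            push_cast
            rw [Finset.mul_sum]
            refine Finset.sum_congr rfl fun o _ => ?_
            by_cases h : owner o ∈ S <;> simp [h]
        _ = ∑ o ∈ U, ∑ S ∈ 𝒮, (if owner o ∈ S then δ S else 0) := Finset.sum_comm
        _ = ∑ o ∈ U, (1 : ℝ) := by
            refine Finset.sum_congr rfl fun o _ => ?_
            rw [← Finset.sum_filter]
            exact hbal (owner o)
        _ = (U.card : ℝ) := by simp
    exact_mod_cast hreal
  -- Hall's theorem
  have hhall : ∀ s : Finset (Σ i : A, Fin (m i)),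
      s.card ≤ (s.biUnion (fun p => G p.1)).card := by
    intro s
    set T := s.image Sigma.fst with hT
    have h1 : s.card ≤ ∑ i ∈ T, m i := by
      have hsub : s ⊆ T.sigma (fun i => (Finset.univ : Finset (Fin (m i)))) := by
        intro p hp
        exact Finset.mem_sigma.mpr ⟨Finset.mem_image_of_mem _ hp, Finset.mem_univ _⟩
      calc s.card ≤ (T.sigma (fun i => (Finset.univ : Finset (Fin (m i))))).card :=
            Finset.card_le_card hsub
        _ = ∑ i ∈ T, m i := by rw [Finset.card_sigma]; simp
    have h2 : s.biUnion (fun p => G p.1) = T.biUnion G := by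
      ext o
      simp only [Finset.mem_biUnion, hT, Finset.mem_image]
      constructor
      · rintro ⟨p, hp, hop⟩; exact ⟨p.1, ⟨p, hp, rfl⟩, hop⟩
      · rintro ⟨i, ⟨p, hp, rfl⟩, hoi⟩; exact ⟨p, hp, hoi⟩
    rw [h2]
    exact h1.trans (key T)
  obtain ⟨f, hfinj, hfmem⟩ :=
    (Finset.all_card_le_biUnion_card_iff_exists_injective
      (fun p : Σ i : A, Fin (m i) => G p.1)).mp hhall
  -- build the grand allocation
  set Y : A → Finset O := fun i => Finset.univ.image (fun k : Fin (m i) => f ⟨i, k⟩) with hY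
  have hYG : ∀ i, Y i ⊆ G i := by
    intro i o ho
    obtain ⟨k, _, rfl⟩ := Finset.mem_image.mp ho
    exact hfmem ⟨i, k⟩
  have hYcard : ∀ i, (Y i).card = m i := by
    intro i
    rw [hY]
    rw [Finset.card_image_of_injective _ (fun k k' h =>
      eq_of_heq (Sigma.mk.inj_iff.mp (hfinj h)).2)]
    simp
  have hYdisj : ∀ i j, i ≠ j → Disjoint (Y i) (Y j) := by
    intro i j hij
    rw [Finset.disjoint_left]
    intro o hoi hoj
    obtain ⟨k, _, hk⟩ := Finset.mem_image.mp hoi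
    obtain ⟨k', _, hk'⟩ := Finset.mem_image.mp hoj
    have : (⟨i, k⟩ : Σ i : A, Fin (m i)) = ⟨j, k'⟩ := hfinj (hk.trans hk'.symm)
    exact hij (congrArg Sigma.fst this)
  refine ⟨Y, ⟨fun i _ j _ hij => hYdisj i j hij, ?_⟩, ?_⟩
  · rw [hcover]; exact Finset.subset_univ _
  · intro i _
    rw [hv, Finset.inter_eq_left.mpr (hYG i), hYcard]
    exact hum i
end

section
/- If an economy has gains from trade and all agents' utilities are injective, then the weak core is nonempty. -/
lemma isSAlloc_empty_fun {A O : Type} [DecidableEq O] (ω : A → Finset O) (S : Finset A) :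
    IsSAlloc ω (fun _ => ∅) S := by
  constructor
  · intro i _ j _ _; simp
  · intro x hx; simp at hx

open Classical in
lemma core_aux {A O : Type} [Fintype A] [Fintype O] [DecidableEq A] [DecidableEq O]
    (ω : A → Finset O) (v : A → Finset O → ℝ)
    (hgft : ∀ (S S' : Finset A) (X X' : A → Finset O),
      IsSAlloc ω X S → IsSAlloc ω X' S' →
      ∃ Y : A → Finset O, IsSAlloc ω Y (S ∪ S') ∧ ∀ h ∈ S ∪ S',
        min (if h ∈ S then v h (X h) else v h (X' h))
            (if h ∈ S' then v h (X' h) else v h (X h)) ≤ v h (Y h)) :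
    ∀ T : Finset A, ∃ X : A → Finset O, IsSAlloc ω X T ∧
      ∀ S, S ⊆ T → S.Nonempty → ∀ X' : A → Finset O, IsSAlloc ω X' S →
        ∃ i ∈ S, v i (X' i) ≤ v i (X i) := by
  intro T
  induction T using Finset.strongInduction with
  | _ T ih =>
    rcases T.eq_empty_or_nonempty with rfl | ⟨a, ha⟩
    · refine ⟨fun _ => ∅, isSAlloc_empty_fun ω ∅, ?_⟩
      intro S hS hSne
      exact absurd (Finset.subset_empty.mp hS) hSne.ne_empty
    · set B := T.erase a with hB
      obtain ⟨w, hw, hwcore⟩ := ih B (Finset.erase_ssubset ha)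
      have hBT : B ⊆ T := Finset.erase_subset a T
      -- the candidate set: T-allocations weakly dominating w on B
      set P : (A → Finset O) → Prop :=
        fun Z => IsSAlloc ω Z T ∧ ∀ h ∈ B, v h (w h) ≤ v h (Z h) with hP
      set cand : Finset (A → Finset O) := Finset.univ.filter P with hcand
      -- cand is nonempty : merge w with the trivial {a}-allocation
      have hcand_ne : cand.Nonempty := by
        obtain ⟨Y, hY, hYmin⟩ :=
          hgft B {a} w (fun _ => ∅) hw (isSAlloc_empty_fun ω {a})
        have hunion : B ∪ {a} = T := by
          ext x
          simp only [Finset.mem_union, Finset.mem_singleton, hB, Finset.mem_erase]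
          constructor
          · rintro (⟨-, hx⟩ | rfl) <;> [exact hx; exact ha]
          · intro hx
            by_cases hxa : x = a
            · exact Or.inr hxa
            · exact Or.inl ⟨hxa, hx⟩
        refine ⟨Y, ?_⟩
        rw [hcand, Finset.mem_filter]
        refine ⟨Finset.mem_univ _, ?_, ?_⟩
        · rw [← hunion]; exact hY
        · intro h hh
          have hha : h ≠ a := (Finset.mem_erase.mp hh).1
          have := hYmin h (by rw [hunion]; exact hBT hh)
          rw [if_pos hh, if_neg (by simpa using hha)] at this
          simpa using this
      -- pick a candidate maximizing agent a's utility
      obtain ⟨Z, hZmem, hZmax⟩ := Finset.exists_max_image cand (fun Z => v a (Z a)) hcand_ne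
      rw [hcand, Finset.mem_filter] at hZmem
      obtain ⟨-, hZalloc, hZdom⟩ := hZmem
      refine ⟨Z, hZalloc, ?_⟩
      intro S hST hSne X' hX'
      by_contra hcon
      push_neg at hcon
      -- every member of S strictly prefers X' to Z
      have hstrict : ∀ i ∈ S, v i (Z i) < v i (X' i) := fun i hi => hcon i hi
      by_cases haS : a ∈ S
      · -- merge X' with w to get a candidate better for a
        obtain ⟨Y, hY, hYmin⟩ := hgft S B X' w hX' hw
        have hunion : S ∪ B = T := by
          apply Finset.Subset.antisymm
          · exact Finset.union_subset hST hBT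
          · intro x hx
            by_cases hxa : x = a
            · exact Finset.mem_union_left _ (hxa ▸ haS)
            · exact Finset.mem_union_right _ (Finset.mem_erase.mpr ⟨hxa, hx⟩)
        have hYcand : Y ∈ cand := by
          rw [hcand, Finset.mem_filter]
          refine ⟨Finset.mem_univ _, ?_, ?_⟩
          · rw [← hunion]; exact hY
          · intro h hh
            have := hYmin h (by rw [hunion]; exact hBT hh)
            rw [if_pos hh] at this
            by_cases hhS : h ∈ S
            · rw [if_pos hhS] at this
              have h1 : v h (w h) ≤ v h (Z h) := hZdom h hh
              have h2 : v h (Z h) < v h (X' h) := hstrict h hhS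
              calc v h (w h) ≤ min (v h (X' h)) (v h (w h)) := by
                    exact le_min (le_of_lt (lt_of_le_of_lt h1 h2)) le_rfl
                _ ≤ v h (Y h) := this
            · rw [if_neg hhS] at this
              simpa using this
        -- Y gives a at least v a (X' a) > v a (Z a), contradicting maximality
        have haB : a ∉ B := Finset.notMem_erase a T
        have hamem : a ∈ S ∪ B := Finset.mem_union_left _ haS
        have := hYmin a hamem
        rw [if_pos haS, if_neg haB, min_self] at this
        have hlt : v a (Z a) < v a (Y a) := lt_of_lt_of_le (hstrict a haS) this
        exact absurd (hZmax Y hYcand) (not_le.mpr hlt)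
      · -- S ⊆ B, so X' blocks w, contradicting IH
        have hSB : S ⊆ B := fun x hx =>
          Finset.mem_erase.mpr ⟨fun h => haS (h ▸ hx), hST hx⟩
        obtain ⟨i, hi, hle⟩ := hwcore S hSB hSne X' hX'
        have : v i (w i) ≤ v i (Z i) := hZdom i (hSB hi)
        exact absurd (hstrict i hi) (not_lt.mpr (le_trans hle this))

/-- an economy with gains from trade and injective utilities has a
nonempty weak core. -/
theorem gains_from_trade_weak_core_nonempty {A O : Type} [Fintype A] [Fintype O]
    [DecidableEq A] [DecidableEq O]
    (ω : A → Finset O) (v : A → Finset O → ℝ)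
    (hne : ∀ i, (ω i).Nonempty)
    (hdisj : ∀ i j, i ≠ j → Disjoint (ω i) (ω j))
    (hcover : Finset.univ.biUnion ω = (Finset.univ : Finset O))
    (hinj : ∀ i, Function.Injective (v i))
    (hgft : ∀ (S S' : Finset A) (X X' : A → Finset O),
      IsSAlloc ω X S → IsSAlloc ω X' S' →
      ∃ Y : A → Finset O, IsSAlloc ω Y (S ∪ S') ∧ ∀ h ∈ S ∪ S',
        min (if h ∈ S then v h (X h) else v h (X' h))
            (if h ∈ S' then v h (X' h) else v h (X h)) ≤ v h (Y h)) :
    ∃ X : A → Finset O, IsSAlloc ω X Finset.univ ∧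
      ¬ ∃ (S : Finset A) (X' : A → Finset O), S.Nonempty ∧ IsSAlloc ω X' S ∧
          ∀ i ∈ S, v i (X i) < v i (X' i) := by
  obtain ⟨X, hX, hcore⟩ := core_aux ω v hgft Finset.univ
  refine ⟨X, hX, ?_⟩
  rintro ⟨S, X', hSne, hX', hblock⟩
  obtain ⟨i, hi, hle⟩ := hcore S (Finset.subset_univ S) hSne X' hX'
  exact absurd (hblock i hi) (not_lt.mpr hle)
end

section
/- In the T-algorithm with k = 2, for any agent i in A₂ = {i : u_i < (Tu)_i} (where T²(u) = u and u ≤ T(u)), there exists a unique j ∈ A₂ \ {i} such that the pair of bundles (v_i^{-1}((Tu)_i), v_j^{-1}(u_j)) forms an {i,j}-allocation, i.e., these two bundles partition ω_i ∪ ω_j. -/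
/-- `B^k_i(u)`: utilities agent `i` can achieve via an `S`-allocation with
`i ∈ S`, `|S| ≤ k`, guaranteeing each other member `j` of `S` at least `u j`. -/
def Bset {A O : Type} [DecidableEq O] (ω : A → Finset O) (v : A → Finset O → ℝ)
    (k : ℕ) (u : A → ℝ) (i : A) : Set ℝ :=
  {x | ∃ (S : Finset A) (X : A → Finset O), i ∈ S ∧ S.card ≤ k ∧ IsSAlloc ω X S ∧
    v i (X i) = x ∧ ∀ j ∈ S, j ≠ i → u j ≤ v j (X j)}

/-- The trading operator `T`: `(T u) i` is the maximum of `B^k_i(u)` (a finite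
nonempty set of reals, so its supremum is its maximum). -/
noncomputable def Tmap {A O : Type} [DecidableEq O] (ω : A → Finset O)
    (v : A → Finset O → ℝ) (k : ℕ) (u : A → ℝ) : A → ℝ :=
  fun i => sSup (Bset ω v k u i)

section Helpers

variable {A O : Type} [Fintype A] [Fintype O] [DecidableEq A] [DecidableEq O]

lemma bset_finite (ω : A → Finset O) (v : A → Finset O → ℝ) (k : ℕ) (u : A → ℝ) (i : A) :
    (Bset ω v k u i).Finite := by
  apply (Set.finite_range (v i)).subset
  rintro x ⟨S, X, _, _, _, hx, _⟩
  exact ⟨X i, hx⟩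

lemma endow_mem_bset (ω : A → Finset O) (v : A → Finset O → ℝ) {k : ℕ} (hk : 1 ≤ k)
    (u : A → ℝ) (i : A) : v i (ω i) ∈ Bset ω v k u i := by
  refine ⟨{i}, ω, Finset.mem_singleton_self i, by simpa using hk,
    ⟨?_, Finset.Subset.refl _⟩, rfl, ?_⟩
  · intro a ha b hb hab
    simp only [Finset.mem_singleton] at ha hb
    exact absurd (ha.trans hb.symm) hab
  · intro j hj hji
    simp only [Finset.mem_singleton] at hj
    exact absurd hj hji

lemma le_Tmap_of_mem (ω : A → Finset O) (v : A → Finset O → ℝ) {k : ℕ} {u : A → ℝ} {i : A}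
    {x : ℝ} (hx : x ∈ Bset ω v k u i) : x ≤ Tmap ω v k u i :=
  le_csSup (bset_finite ω v k u i).bddAbove hx

lemma Tmap_mem (ω : A → Finset O) (v : A → Finset O → ℝ) {k : ℕ} (hk : 1 ≤ k)
    (u : A → ℝ) (i : A) : Tmap ω v k u i ∈ Bset ω v k u i :=
  Set.Nonempty.csSup_mem ⟨_, endow_mem_bset ω v hk u i⟩ (bset_finite ω v k u i)

lemma v_mono_le {v : A → Finset O → ℝ}
    (hmono : ∀ i, ∀ X Y : Finset O, X ⊂ Y → v i X < v i Y)
    (i : A) {X Y : Finset O} (h : X ⊆ Y) : v i X ≤ v i Y := by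
  rcases eq_or_lt_of_le (Finset.le_iff_subset.mpr h) with rfl | h'
  · exact le_refl _
  · exact (hmono i X Y (Finset.lt_iff_ssubset.mp h')).le

end Helpers

/-- with `k = 2`, each agent `i ∈ A₂ = {i : u i < (T u) i}` has a
unique partner `j ∈ A₂ \ {i}` such that the bundles `v i ⁻¹((T u) i)` and
`v j ⁻¹(u j)` partition `ω i ∪ ω j`. -/
theorem pairwise_cycle_partner {A O : Type} [Fintype A] [Fintype O]
    [DecidableEq A] [DecidableEq O]
    (ω : A → Finset O) (v : A → Finset O → ℝ)
    (hne : ∀ i, (ω i).Nonempty)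
    (hdisj : ∀ i j, i ≠ j → Disjoint (ω i) (ω j))
    (hcover : Finset.univ.biUnion ω = (Finset.univ : Finset O))
    (hinj : ∀ i, Function.Injective (v i))
    (hmono : ∀ i, ∀ X Y : Finset O, X ⊂ Y → v i X < v i Y)
    (u : A → ℝ)
    (hfix : Tmap ω v 2 (Tmap ω v 2 u) = u)
    (hle : u ≤ Tmap ω v 2 u)
    (i : A) (hi : u i < Tmap ω v 2 u i) :
    ∃! j : A, j ≠ i ∧ u j < Tmap ω v 2 u j ∧
      ∃ Xi Xj : Finset O, v i Xi = Tmap ω v 2 u i ∧ v j Xj = u j ∧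
        Disjoint Xi Xj ∧ Xi ∪ Xj = ω i ∪ ω j := by
  -- individual rationality: v m (ω m) ≤ u m
  have hIR : ∀ m, v m (ω m) ≤ u m := by
    intro m
    have h := le_Tmap_of_mem ω v
      (endow_mem_bset ω v one_le_two (Tmap ω v 2 u) m)
    rwa [congrFun hfix m] at h
  obtain ⟨S, X, hiS, hcard, ⟨hXdisj, hXsub⟩, hvXi, hguar⟩ :=
    Tmap_mem ω v one_le_two u i
  -- there is a partner j ∈ S, j ≠ i
  have hexj : ∃ j ∈ S, j ≠ i := by
    by_contra h
    push_neg at h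
    have hS : S = {i} := Finset.eq_singleton_iff_unique_mem.mpr ⟨hiS, fun x hx => h x hx⟩
    have hXi : X i ⊆ ω i := by
      rw [hS] at hXsub
      simpa using hXsub
    have hva : v i (X i) ≤ u i := (v_mono_le hmono i hXi).trans (hIR i)
    rw [hvXi] at hva
    exact absurd hva (not_le.mpr hi)
  obtain ⟨j, hjS, hjne⟩ := hexj
  have hSij : S = {i, j} := by
    refine (Finset.eq_of_subset_of_card_le ?_ ?_).symm
    · intro x hx
      simp only [Finset.mem_insert, Finset.mem_singleton] at hx
      rcases hx with rfl | rfl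
      · exact hiS
      · exact hjS
    · rw [Finset.card_pair (Ne.symm hjne)]
      exact hcard
  rw [hSij] at hXsub
  have hXsub' : X i ∪ X j ⊆ ω i ∪ ω j := by
    simpa [Finset.biUnion_insert, hjne.symm] using hXsub
  have hdisjXiXj0 : Disjoint (X i) (X j) :=
    hXdisj i hiS j hjS (Ne.symm hjne)
  set Xj : Finset O := (ω i ∪ ω j) \ X i with hXjdef
  have hXiS : X i ⊆ ω i ∪ ω j := Finset.Subset.trans Finset.subset_union_left hXsub'
  have hunion : X i ∪ Xj = ω i ∪ ω j := Finset.union_sdiff_of_subset hXiS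
  have hdisjXiXj : Disjoint (X i) Xj := Finset.disjoint_sdiff
  have hXjsub : X j ⊆ Xj := Finset.subset_sdiff.mpr
    ⟨Finset.Subset.trans Finset.subset_union_right hXsub', hdisjXiXj0.symm⟩
  have huj_le : u j ≤ v j Xj := (hguar j hjS hjne).trans (v_mono_le hmono j hXjsub)
  -- the augmented bundle for j is in Bset at level Tmap u
  have hcommon : ∀ (w : A → ℝ),
      (∀ a ∈ ({j, i} : Finset A), ∀ b ∈ ({j, i} : Finset A), a ≠ b →
        Disjoint ((fun m => if m = i then X i else Xj) a)
          ((fun m => if m = i then X i else Xj) b)) ∧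
      ({j, i} : Finset A).biUnion (fun m => if m = i then X i else Xj)
        ⊆ ({j, i} : Finset A).biUnion ω := by
    intro w
    constructor
    · intro a ha b hb hab
      simp only [Finset.mem_insert, Finset.mem_singleton] at ha hb
      rcases ha with rfl | rfl <;> rcases hb with rfl | rfl
      · exact absurd rfl hab
      · simp only [if_neg hjne, if_pos rfl]
        exact hdisjXiXj.symm
      · simp only [if_neg hjne, if_pos rfl]
        exact hdisjXiXj
      · exact absurd rfl hab
    · have h1 : ({j, i} : Finset A).biUnion (fun m => if m = i then X i else Xj)
          = Xj ∪ X i := by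
        simp [Finset.biUnion_insert, hjne]
      have h2 : ({j, i} : Finset A).biUnion ω = ω j ∪ ω i := by
        simp [Finset.biUnion_insert]
      rw [h1, h2, Finset.union_comm Xj, Finset.union_comm (ω j), hunion]
  have pairalloc1 : ∀ (w : A → ℝ), w i ≤ v i (X i) → v j Xj ∈ Bset ω v 2 w j := by
    intro w hwi
    obtain ⟨hd, hb⟩ := hcommon w
    refine ⟨{j, i}, fun m => if m = i then X i else Xj, by simp, ?_, ⟨hd, hb⟩, ?_, ?_⟩
    · exact (Finset.card_insert_le _ _).trans (by simp)
    · simp [hjne]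
    · intro m hm hmj
      simp only [Finset.mem_insert, Finset.mem_singleton] at hm
      rcases hm with rfl | rfl
      · exact absurd rfl hmj
      · simpa using hwi
  have pairalloc2 : ∀ (w : A → ℝ), w j ≤ v j Xj → v i (X i) ∈ Bset ω v 2 w i := by
    intro w hwj
    obtain ⟨hd, hb⟩ := hcommon w
    refine ⟨{j, i}, fun m => if m = i then X i else Xj, by simp, ?_, ⟨hd, hb⟩, ?_, ?_⟩
    · exact (Finset.card_insert_le _ _).trans (by simp)
    · simp
    · intro m hm hmi
      simp only [Finset.mem_insert, Finset.mem_singleton] at hm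
      rcases hm with rfl | rfl
      · simpa [hjne] using hwj
      · exact absurd rfl hmi
  -- v j Xj = u j
  have hmemj : v j Xj ∈ Bset ω v 2 (Tmap ω v 2 u) j :=
    pairalloc1 (Tmap ω v 2 u) (le_of_eq hvXi.symm)
  have hvXjeq : v j Xj = u j := by
    have h := le_Tmap_of_mem ω v hmemj
    rw [congrFun hfix j] at h
    exact le_antisymm h huj_le
  -- j ∈ A₂
  have hjA2 : u j < Tmap ω v 2 u j := by
    rcases lt_or_eq_of_le (hle j) with h | h
    · exact h
    · exfalso
      have hmemi : v i (X i) ∈ Bset ω v 2 (Tmap ω v 2 u) i :=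
        pairalloc2 (Tmap ω v 2 u) (by rw [hvXjeq]; exact h.symm.le)
      have h2 := le_Tmap_of_mem ω v hmemi
      rw [congrFun hfix i, hvXi] at h2
      exact absurd h2 (not_le.mpr hi)
  -- assemble existence and uniqueness
  refine ⟨j, ⟨hjne, hjA2, X i, Xj, hvXi, hvXjeq, hdisjXiXj, hunion⟩, ?_⟩
  rintro y ⟨hyne, -, Yi, Yj, hvYi, hvYj, hYdisj, hYunion⟩
  by_contra hyj
  have hYieq : Yi = X i := hinj i (by rw [hvYi, hvXi])
  have hYisub : Yi ⊆ ω i := by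
    intro a ha
    have h1 : a ∈ ω i ∪ ω y := by
      rw [← hYunion]
      exact Finset.mem_union_left _ ha
    have h2 : a ∈ ω i ∪ ω j := by
      rw [← hunion]
      rw [hYieq] at ha
      exact Finset.mem_union_left _ ha
    rcases Finset.mem_union.mp h1 with h | h
    · exact h
    rcases Finset.mem_union.mp h2 with h' | h'
    · exact h'
    · exact absurd h' (Finset.disjoint_left.mp (hdisj y j hyj) h)
  have hva : v i Yi ≤ u i := (v_mono_le hmono i hYisub).trans (hIR i)
  rw [hvYi] at hva
  exact absurd hva (not_le.mpr hi)
end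

section
/- Under discrete transferable utility and strictly monotone injective utilities, in the directed graph on A₂ = {i : u_i < (Tu)_i} (where u = T²u, u ≤ Tu, k = 2) with edge i → j when ((Tu)_i, u_j) is achieved by an {i,j}-allocation, every cycle has length exactly two. -/
/-- An `{i,j}`-allocation: two disjoint bundles drawn from `ω i ∪ ω j`. -/
def PairAlloc {A O : Type} [DecidableEq O] (ω : A → Finset O) (i j : A)
    (Xi Xj : Finset O) : Prop :=
  Disjoint Xi Xj ∧ Xi ∪ Xj ⊆ ω i ∪ ω j

/-- `θ` is feasible for the pair `(i,j)` if some `{i,j}`-allocation gives `j`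
utility at least `θ`. -/
def PairFeasible {A O : Type} [DecidableEq O] (ω : A → Finset O)
    (v : A → Finset O → ℝ) (i j : A) (θ : ℝ) : Prop :=
  ∃ Xi Xj : Finset O, PairAlloc ω i j Xi Xj ∧ θ ≤ v j Xj

/-- The pairwise Pareto frontier `v_{i,j}(θ)`: the largest utility `i` can get
while guaranteeing `j` at least `θ`. -/
noncomputable def pairFrontier {A O : Type} [DecidableEq O] (ω : A → Finset O)
    (v : A → Finset O → ℝ) (i j : A) (θ : ℝ) : ℝ :=
  sSup {x | ∃ Xi Xj : Finset O, PairAlloc ω i j Xi Xj ∧ θ ≤ v j Xj ∧ v i Xi = x}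

/-- Discrete transferable utility. -/
def DiscreteTU {A O : Type} [DecidableEq O] (ω : A → Finset O)
    (v : A → Finset O → ℝ) : Prop :=
  ∀ (i j : A) (θ θ' : ℝ), i ≠ j → θ < θ' → PairFeasible ω v i j θ' →
    pairFrontier ω v i j θ - pairFrontier ω v i j θ' ≤ θ' - θ

/-- The edge `i → j` on `A₂`: `((T u) i, u j)` is achieved by an
`{i,j}`-allocation. -/
def TEdge {A O : Type} [DecidableEq O] (ω : A → Finset O) (v : A → Finset O → ℝ)
    (u : A → ℝ) (i j : A) : Prop :=
  i ≠ j ∧ u i < Tmap ω v 2 u i ∧ u j < Tmap ω v 2 u j ∧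
    ∃ Xi Xj : Finset O, v i Xi = Tmap ω v 2 u i ∧ v j Xj = u j ∧
      Disjoint Xi Xj ∧ Xi ∪ Xj = ω i ∪ ω j


section CycleAux

set_option linter.unusedSectionVars false

variable {A O : Type} [Fintype A] [Fintype O] [DecidableEq A] [DecidableEq O]

lemma vmle (v : A → Finset O → ℝ) (hmono : ∀ i, ∀ X Y : Finset O, X ⊂ Y → v i X < v i Y)
    (a : A) {X Y : Finset O} (h : X ⊆ Y) : v a X ≤ v a Y := by
  rcases eq_or_ne X Y with rfl | hne
  · exact le_refl _
  · exact (hmono a X Y (Finset.ssubset_iff_subset_ne.mpr ⟨h, hne⟩)).le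

lemma bset_bdd (ω : A → Finset O) (v : A → Finset O → ℝ) (k : ℕ) (u : A → ℝ) (a : A) :
    BddAbove (Bset ω v k u a) := by
  apply Set.Finite.bddAbove
  apply (Set.finite_range (v a)).subset
  rintro x ⟨S, X, -, -, -, rfl, -⟩
  exact ⟨X a, rfl⟩

lemma fset_fin (ω : A → Finset O) (v : A → Finset O → ℝ) (a b : A) (θ : ℝ) :
    {x | ∃ Xa Xb : Finset O, PairAlloc ω a b Xa Xb ∧ θ ≤ v b Xb ∧ v a Xa = x}.Finite := by
  apply (Set.finite_range (v a)).subset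
  rintro x ⟨Xa, Xb, -, -, rfl⟩
  exact ⟨Xa, rfl⟩

lemma mem_bset_pair (ω : A → Finset O) (v : A → Finset O → ℝ) (u : A → ℝ)
    {a b : A} (hab : a ≠ b) {Za Zb : Finset O} (hpa : PairAlloc ω a b Za Zb)
    (hg : u b ≤ v b Zb) : v a Za ∈ Bset ω v 2 u a := by
  obtain ⟨hd, hs⟩ := hpa
  have hba : b ≠ a := hab.symm
  refine ⟨{a, b}, fun x => if x = a then Za else if x = b then Zb else ∅,
    by simp, ?_, ⟨?_, ?_⟩, by simp, ?_⟩
  · exact (Finset.card_insert_le _ _).trans (by simp)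
  · intro x hx y hy hxy
    simp only [Finset.mem_insert, Finset.mem_singleton] at hx hy
    rcases hx with rfl | rfl <;> rcases hy with rfl | rfl
    · exact absurd rfl hxy
    · simpa [hba] using hd
    · simpa [hba] using hd.symm
    · exact absurd rfl hxy
  · intro x hx
    simp only [Finset.mem_biUnion, Finset.mem_insert, Finset.mem_singleton] at hx
    obtain ⟨y, hy, hxy⟩ := hx
    have hxZ : x ∈ Za ∪ Zb := by
      rcases hy with rfl | rfl
      · rw [if_pos rfl] at hxy; exact Finset.mem_union_left _ hxy
      · rw [if_neg hba, if_pos rfl] at hxy; exact Finset.mem_union_right _ hxy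
    have hx2 := hs hxZ
    simp only [Finset.mem_biUnion, Finset.mem_insert, Finset.mem_singleton]
    rcases Finset.mem_union.mp hx2 with h | h
    · exact ⟨a, Or.inl rfl, h⟩
    · exact ⟨b, Or.inr rfl, h⟩
  · intro y hy hya
    simp only [Finset.mem_insert, Finset.mem_singleton] at hy
    rcases hy with rfl | rfl
    · exact absurd rfl hya
    · simpa [hba] using hg

lemma mem_bset_single (ω : A → Finset O) (v : A → Finset O → ℝ) (u : A → ℝ) (a : A) :
    v a (ω a) ∈ Bset ω v 2 u a := by
  refine ⟨{a}, fun _ => ω a, by simp, by simp, ⟨?_, by simp⟩, rfl, ?_⟩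
  · intro x hx y hy hxy
    simp only [Finset.mem_singleton] at hx hy
    subst hx; subst hy; exact absurd rfl hxy
  · intro y hy hya
    simp only [Finset.mem_singleton] at hy
    exact absurd hy hya

lemma endow_le (ω : A → Finset O) (v : A → Finset O → ℝ) (u : A → ℝ)
    (hfix : Tmap ω v 2 (Tmap ω v 2 u) = u) (a : A) : v a (ω a) ≤ u a := by
  calc v a (ω a) ≤ Tmap ω v 2 (Tmap ω v 2 u) a :=
        le_csSup (bset_bdd ω v 2 _ a) (mem_bset_single ω v _ a)
    _ = u a := congrFun hfix a

lemma le_tmap_pair (ω : A → Finset O) (v : A → Finset O → ℝ) (u : A → ℝ)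
    {a b : A} (hab : a ≠ b) {Za Zb : Finset O} (hpa : PairAlloc ω a b Za Zb)
    (hg : u b ≤ v b Zb) : v a Za ≤ Tmap ω v 2 u a :=
  le_csSup (bset_bdd ω v 2 u a) (mem_bset_pair ω v u hab hpa hg)

lemma edge_key (ω : A → Finset O) (v : A → Finset O → ℝ)
    (hne : ∀ i, (ω i).Nonempty)
    (hmono : ∀ i, ∀ X Y : Finset O, X ⊂ Y → v i X < v i Y)
    (hDTU : DiscreteTU ω v)
    (u : A → ℝ)
    (hfix : Tmap ω v 2 (Tmap ω v 2 u) = u)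
    (i j : A) (he : TEdge ω v u i j) :
    (Tmap ω v 2 u i - u i ≤ Tmap ω v 2 u j - u j) ∧
    (Tmap ω v 2 u j - u j ≤ Tmap ω v 2 u i - u i →
      ∃ Z : Finset O, Z ⊆ ω i ∪ ω j ∧ v j Z = Tmap ω v 2 u j) := by
  obtain ⟨hij, hui, huj, Xi, Xj, hXi, hXj, hXd, hXu⟩ := he
  have hvendow : ∀ a, v a (ω a) ≤ u a := endow_le ω v u hfix
  have hvemp : ∀ a, v a ∅ < v a (ω a) := fun a =>
    hmono a ∅ (ω a) (Finset.empty_ssubset.mpr (hne a))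
  have hei : v i ∅ < u i := (hvemp i).trans_le (hvendow i)
  have hXusub : Xi ∪ Xj ⊆ ω i ∪ ω j := hXu ▸ Finset.Subset.refl _
  have hXine : Xi.Nonempty := by
    rcases Xi.eq_empty_or_nonempty with h | h
    · rw [h] at hXi
      exact absurd hXi (ne_of_lt (hei.trans hui))
    · exact h
  have hXjsub : Xj ⊆ ω i ∪ ω j := by
    rw [← hXu]; exact Finset.subset_union_right
  have hXjss : Xj ⊂ ω i ∪ ω j := by
    obtain ⟨x, hx⟩ := hXine
    refine (Finset.ssubset_iff_of_subset hXjsub).mpr ⟨x, ?_, ?_⟩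
    · rw [← hXu]; exact Finset.mem_union_left _ hx
    · exact Finset.disjoint_left.mp hXd hx
  have hujF : u j < v j (ω i ∪ ω j) := by
    rw [← hXj]; exact hmono j _ _ hXjss
  have hpa_ij : PairAlloc ω i j Xi Xj := ⟨hXd, hXusub⟩
  have hpa_ji : PairAlloc ω j i Xj Xi :=
    ⟨hXd.symm, by rw [Finset.union_comm Xj Xi, Finset.union_comm (ω j) (ω i)]; exact hXusub⟩
  have hFf := fun (a b : A) (θ : ℝ) => Set.Finite.bddAbove (fset_fin ω v a b θ)
  -- frontier of (i,j) at u j equals Tmap u i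
  have hfr_ij_uj : pairFrontier ω v i j (u j) = Tmap ω v 2 u i := by
    have hmem : Tmap ω v 2 u i ∈
        {x | ∃ Xa Xb : Finset O, PairAlloc ω i j Xa Xb ∧ u j ≤ v j Xb ∧ v i Xa = x} :=
      ⟨Xi, Xj, hpa_ij, hXj.ge, hXi⟩
    apply le_antisymm
    · apply csSup_le ⟨_, hmem⟩
      rintro x ⟨Zi, Zj, hpa, hg, rfl⟩
      exact le_tmap_pair ω v u hij hpa hg
    · exact le_csSup (hFf i j (u j)) hmem
  -- frontier of (j,i) at Tmap u i equals u j
  have hfr_ji_wi : pairFrontier ω v j i (Tmap ω v 2 u i) = u j := by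
    have hmem : u j ∈
        {x | ∃ Xa Xb : Finset O, PairAlloc ω j i Xa Xb ∧ Tmap ω v 2 u i ≤ v i Xb ∧ v j Xa = x} :=
      ⟨Xj, Xi, hpa_ji, hXi.ge, hXj⟩
    apply le_antisymm
    · apply csSup_le ⟨_, hmem⟩
      rintro x ⟨Zj, Zi, hpa, hg, rfl⟩
      calc v j Zj ≤ Tmap ω v 2 (Tmap ω v 2 u) j := le_tmap_pair ω v _ hij.symm hpa hg
        _ = u j := congrFun hfix j
    · exact le_csSup (hFf j i _) hmem
  -- frontier of (j,i) at v i ∅ is the full bundle value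
  have hfr_ji_bot : pairFrontier ω v j i (v i ∅) = v j (ω j ∪ ω i) := by
    have hmem : v j (ω j ∪ ω i) ∈
        {x | ∃ Xa Xb : Finset O, PairAlloc ω j i Xa Xb ∧ v i ∅ ≤ v i Xb ∧ v j Xa = x} :=
      ⟨ω j ∪ ω i, ∅, ⟨Finset.disjoint_empty_right _, by simp⟩, le_refl _, rfl⟩
    apply le_antisymm
    · apply csSup_le ⟨_, hmem⟩
      rintro x ⟨Zj, Zi, ⟨hd, hs⟩, hg, rfl⟩
      exact vmle v hmono j (Finset.subset_union_left.trans hs)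
    · exact le_csSup (hFf j i _) hmem
  -- frontier of (i,j) at the full value is v i ∅
  have hfr_ij_F : pairFrontier ω v i j (v j (ω i ∪ ω j)) = v i ∅ := by
    have hmem : v i ∅ ∈
        {x | ∃ Xa Xb : Finset O, PairAlloc ω i j Xa Xb ∧
          v j (ω i ∪ ω j) ≤ v j Xb ∧ v i Xa = x} :=
      ⟨∅, ω i ∪ ω j, ⟨Finset.disjoint_empty_left _, by simp⟩, le_refl _, rfl⟩
    apply le_antisymm
    · apply csSup_le ⟨_, hmem⟩
      rintro x ⟨Zi, Zj, ⟨hd, hs⟩, hg, rfl⟩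
      have hZjsub : Zj ⊆ ω i ∪ ω j := Finset.subset_union_right.trans hs
      have hZj : Zj = ω i ∪ ω j := by
        by_contra hcon
        exact absurd hg
          (not_le.mpr (hmono j _ _ (Finset.ssubset_iff_subset_ne.mpr ⟨hZjsub, hcon⟩)))
      have hZi : Zi = ∅ := by
        rw [hZj] at hd
        have hZisub : Zi ⊆ ω i ∪ ω j := Finset.subset_union_left.trans hs
        rw [Finset.eq_empty_iff_forall_notMem]
        intro x hx
        exact Finset.disjoint_left.mp hd hx (hZisub hx)
      rw [hZi]
    · exact le_csSup (hFf i j _) hmem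
  have hcommv : v j (ω j ∪ ω i) = v j (ω i ∪ ω j) := by rw [Finset.union_comm]
  -- DTU applications
  have hd1 := hDTU j i (v i ∅) (Tmap ω v 2 u i) hij.symm (hei.trans hui)
    ⟨Xj, Xi, hpa_ji, hXi.ge⟩
  rw [hfr_ji_bot, hfr_ji_wi] at hd1
  have hd2 := hDTU i j (u j) (v j (ω i ∪ ω j)) hij hujF
    ⟨∅, ω i ∪ ω j, ⟨Finset.disjoint_empty_left _, by simp⟩, le_refl _⟩
  rw [hfr_ij_uj, hfr_ij_F] at hd2
  have hd3 := hDTU j i (v i ∅) (u i) hij.symm hei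
    ⟨Xj, Xi, hpa_ji, by rw [hXi]; exact hui.le⟩
  rw [hfr_ji_bot] at hd3
  -- the frontier of (j,i) at u i is at most Tmap u j
  have hq_wit : u j ∈
      {x | ∃ Xa Xb : Finset O, PairAlloc ω j i Xa Xb ∧ u i ≤ v i Xb ∧ v j Xa = x} :=
    ⟨Xj, Xi, hpa_ji, by rw [hXi]; exact hui.le, hXj⟩
  have hq_le : pairFrontier ω v j i (u i) ≤ Tmap ω v 2 u j := by
    apply csSup_le ⟨_, hq_wit⟩
    rintro x ⟨Zj, Zi, hpa, hg, rfl⟩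
    exact le_tmap_pair ω v u hij.symm hpa hg
  have hq3 : pairFrontier ω v j i (u i) = sSup
      {x | ∃ Xa Xb : Finset O, PairAlloc ω j i Xa Xb ∧ u i ≤ v i Xb ∧ v j Xa = x} := rfl
  constructor
  · linarith [hd1, hd2, hd3, hq_le, hcommv]
  · intro hgle
    have hq_eq : pairFrontier ω v j i (u i) = Tmap ω v 2 u j :=
      le_antisymm hq_le (by linarith [hd1, hd2, hd3, hcommv])
    have hmem := Set.Nonempty.csSup_mem ⟨_, hq_wit⟩ (fset_fin ω v j i (u i))
    rw [← hq3, hq_eq] at hmem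
    obtain ⟨Zj, Zi, ⟨hd, hs⟩, hg, hval⟩ := hmem
    have h1 : Zj ⊆ ω j ∪ ω i := Finset.subset_union_left.trans hs
    rw [Finset.union_comm (ω j) (ω i)] at h1
    exact ⟨Zj, h1, hval⟩

end CycleAux

/-- under discrete transferable utility every cycle of the
successor graph on `A₂` has length exactly two. -/
theorem cycles_have_length_two {A O : Type} [Fintype A] [Fintype O]
    [DecidableEq A] [DecidableEq O]
    (ω : A → Finset O) (v : A → Finset O → ℝ)
    (hne : ∀ i, (ω i).Nonempty)
    (hdisj : ∀ i j, i ≠ j → Disjoint (ω i) (ω j))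
    (hcover : Finset.univ.biUnion ω = (Finset.univ : Finset O))
    (hinj : ∀ i, Function.Injective (v i))
    (hmono : ∀ i, ∀ X Y : Finset O, X ⊂ Y → v i X < v i Y)
    (hDTU : DiscreteTU ω v)
    (u : A → ℝ)
    (hfix : Tmap ω v 2 (Tmap ω v 2 u) = u)
    (hle : u ≤ Tmap ω v 2 u)
    (n : ℕ) (hn : 0 < n) (c : ℕ → A)
    (hper : ∀ m, c (m + n) = c m)
    (hinjc : ∀ a < n, ∀ b < n, c a = c b → a = b)
    (hedge : ∀ m, TEdge ω v u (c m) (c (m + 1))) :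
    n = 2 := by
  have hkey : ∀ m : ℕ, (Tmap ω v 2 u (c m) - u (c m) ≤
        Tmap ω v 2 u (c (m + 1)) - u (c (m + 1))) ∧
      (Tmap ω v 2 u (c (m + 1)) - u (c (m + 1)) ≤ Tmap ω v 2 u (c m) - u (c m) →
        ∃ Z : Finset O, Z ⊆ ω (c m) ∪ ω (c (m + 1)) ∧
          v (c (m + 1)) Z = Tmap ω v 2 u (c (m + 1))) :=
    fun m => edge_key ω v hne hmono hDTU u hfix (c m) (c (m + 1)) (hedge m)
  have hmonof : Monotone (fun m => Tmap ω v 2 u (c m) - u (c m)) :=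
    monotone_nat_of_le_succ (fun m => (hkey m).1)
  have hcn : c n = c 0 := by simpa using hper 0
  have h10 : Tmap ω v 2 u (c (0 + 1)) - u (c (0 + 1)) ≤
      Tmap ω v 2 u (c 0) - u (c 0) := by
    have h := hmonof (show 1 ≤ n from hn)
    simp only at h
    rw [hcn] at h
    exact h
  obtain ⟨Z, hZsub, hZval⟩ := (hkey 0).2 h10
  have hedge1 : TEdge ω v u (c 1) (c 2) := hedge 1
  obtain ⟨h12, hu1, hu2, Y1, Y2, hY1, hY2, hYd, hYu⟩ := hedge1
  have hZval' : v (c 1) Z = Tmap ω v 2 u (c 1) := hZval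
  have hZsub' : Z ⊆ ω (c 0) ∪ ω (c 1) := hZsub
  have hZY : Z = Y1 := hinj (c 1) (by rw [hZval', hY1])
  have hc20 : c 2 = c 0 := by
    by_contra hne20
    have hY1sub : Y1 ⊆ ω (c 1) := by
      intro x hx
      have hx1 : x ∈ ω (c 0) ∪ ω (c 1) := hZsub' (hZY ▸ hx)
      have hx2 : x ∈ ω (c 1) ∪ ω (c 2) := by
        rw [← hYu]; exact Finset.mem_union_left _ hx
      rcases Finset.mem_union.mp hx1 with h | h
      · rcases Finset.mem_union.mp hx2 with h' | h'
        · exact h'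
        · exact absurd h'
            (Finset.disjoint_left.mp (hdisj (c 0) (c 2) (fun hh => hne20 hh.symm)) h)
      · exact h
    have hcon : Tmap ω v 2 u (c 1) ≤ u (c 1) := by
      rw [← hY1]
      exact (vmle v hmono (c 1) hY1sub).trans (endow_le ω v u hfix (c 1))
    exact absurd hcon (not_le.mpr hu1)
  rcases n with _ | n
  · exact absurd hn (by omega)
  rcases n with _ | n
  · exfalso
    exact (hedge 0).1 (hper 0).symm
  rcases n with _ | n
  · rfl
  · exfalso
    exact absurd (hinjc 2 (by omega) 0 (by omega) hc20) (by omega)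
end

section
/- In the Shapley–Scarf housing model, for every round r of the TTC algorithm and every agent i assigned a house in round r (i ∈ A_r), the iterates of T stabilize at i from iteration 2r−1 onward: (T^{2r-1}ū)_i = (T^{2r}ū)_i = (T^{2r+1}ū)_i = ⋯, and this common value is the utility i obtains from her TTC house. -/
/-- In the Shapley–Scarf housing model (houses indexed by agents, `ω i = {h i}`),
an `S`-allocation is a permutation of houses fixing agents outside the trade.
`HBset v u i` is the set of utilities `i` can achieve in a cyclic trade
guaranteeing every other participant `j` at least `u j`. -/
def HBset {A : Type} [Fintype A] [DecidableEq A] (v : A → A → ℝ)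
    (u : A → ℝ) (i : A) : Set ℝ :=
  {x | ∃ σ : Equiv.Perm A, v i (σ i) = x ∧ ∀ j, j ≠ i → σ j ≠ j → u j ≤ v j (σ j)}

/-- The trading operator `T` of the housing model. -/
noncomputable def HT {A : Type} [Fintype A] [DecidableEq A]
    (v : A → A → ℝ) (u : A → ℝ) : A → ℝ :=
  fun i => sSup (HBset v u i)

open Classical in
/-- The agents of `R` lying on a cycle of the top-choice map `f R`
(these get their final houses when `R` is the set of remaining agents). -/
noncomputable def cycleAgents {A : Type} [Fintype A] [DecidableEq A]
    (f : Finset A → A → A) (R : Finset A) : Finset A :=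
  R.filter (fun i => ∃ n > 0, (f R)^[n] i = i)

/-- Remaining agents at the start of round `r+1` of TTC (0-indexed:
`Rset f 0 = A`, and round `r+1` of the paper operates on `Rset f r`). -/
noncomputable def Rset {A : Type} [Fintype A] [DecidableEq A]
    (f : Finset A → A → A) : ℕ → Finset A
  | 0 => Finset.univ
  | r + 1 => Rset f r \ cycleAgents f (Rset f r)

section Aux

variable {A : Type} [Fintype A] [DecidableEq A]

lemma HBset_bddAbove (v : A → A → ℝ) (u : A → ℝ) (i : A) : BddAbove (HBset v u i) := by
  apply Set.Finite.bddAbove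
  apply (Set.finite_range (v i)).subset
  rintro x ⟨σ, rfl, -⟩
  exact ⟨σ i, rfl⟩

lemma self_mem_HBset (v : A → A → ℝ) (u : A → ℝ) (i : A) : v i i ∈ HBset v u i :=
  ⟨Equiv.refl A, rfl, fun j _ hj => absurd rfl hj⟩

open Classical in
lemma mem_cycleAgents_iff (f : Finset A → A → A) (R : Finset A) (i : A) :
    i ∈ cycleAgents f R ↔ i ∈ R ∧ ∃ n > 0, (f R)^[n] i = i := by
  unfold cycleAgents
  exact Finset.mem_filter

lemma cycleAgents_subset (f : Finset A → A → A) (R : Finset A) :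
    cycleAgents f R ⊆ R := by
  classical
  unfold cycleAgents
  exact Finset.filter_subset _ _

lemma cycleAgents_closed {f : Finset A → A → A} {R : Finset A}
    (hfR : ∀ i ∈ R, f R i ∈ R)
    {i : A} (hi : i ∈ cycleAgents f R) : f R i ∈ cycleAgents f R := by
  rw [mem_cycleAgents_iff] at hi ⊢
  obtain ⟨hiR, n, hn, hcyc⟩ := hi
  refine ⟨hfR i hiR, n, hn, ?_⟩
  have h1 : (f R)^[n] (f R i) = f R ((f R)^[n] i) := by
    rw [← Function.iterate_succ_apply, Function.iterate_succ_apply']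
  rw [h1, hcyc]

lemma Rset_anti (f : Finset A → A → A) : ∀ {r s : ℕ}, r ≤ s → Rset f s ⊆ Rset f r := by
  intro r s h
  induction s with
  | zero => simp_all
  | succ s ih =>
    rcases Nat.lt_or_ge r (s+1) with h' | h'
    · exact (Finset.sdiff_subset).trans (ih (by omega))
    · have : r = s + 1 := by omega
      subst this; exact Finset.Subset.refl _

lemma mem_cycle_not_mem_Rset (f : Finset A → A → A) {s t : ℕ} (hst : s < t) {k : A}
    (hk : k ∈ cycleAgents f (Rset f s)) : k ∉ Rset f t := by
  intro hmem
  have h1 : k ∈ Rset f (s+1) := Rset_anti f hst hmem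
  simp only [Rset, Finset.mem_sdiff] at h1
  exact h1.2 hk

lemma not_mem_Rset (f : Finset A → A → A) {s : ℕ} {k : A} (hk : k ∉ Rset f s) :
    ∃ s' < s, k ∈ cycleAgents f (Rset f s') := by
  induction s with
  | zero => simp [Rset] at hk
  | succ s ih =>
    by_cases h : k ∈ Rset f s
    · simp only [Rset, Finset.mem_sdiff] at hk
      push_neg at hk
      exact ⟨s, Nat.lt_succ_self s, hk h⟩
    · obtain ⟨s', hs', hmem⟩ := ih h
      exact ⟨s', hs'.trans (Nat.lt_succ_self s), hmem⟩

lemma cycle_rounds_eq (f : Finset A → A → A) {s t : ℕ} {k : A}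
    (hs : k ∈ cycleAgents f (Rset f s)) (ht : k ∈ cycleAgents f (Rset f t)) : s = t := by
  by_contra h
  rcases Nat.lt_or_ge s t with h' | h'
  · exact mem_cycle_not_mem_Rset f h' hs (cycleAgents_subset f _ ht)
  · exact mem_cycle_not_mem_Rset f (by omega) ht (cycleAgents_subset f _ hs)

end Aux
lemma iterate_mem_R {A : Type} [Fintype A] [DecidableEq A]
    {f : Finset A → A → A} {R : Finset A}
    (hfR : ∀ i ∈ R, f R i ∈ R) {i : A} (hi : i ∈ R) :
    ∀ k : ℕ, (f R)^[k] i ∈ R := by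
  intro k
  induction k with
  | zero => exact hi
  | succ k ihk => rw [Function.iterate_succ_apply']; exact hfR _ ihk


/-- in the housing model, for every round `r+1` of TTC and every
agent `i` obtaining a house in that round (`i ∈ A_{r+1}`), the iterates of `T`
starting from the endowment utilities `ū` stabilize at `i` from iteration
`2(r+1) − 1` onward, at the utility of `i`'s TTC house. -/
theorem TTC_iterates_stabilize {A : Type} [Fintype A] [DecidableEq A]
    (v : A → A → ℝ)
    (hinj : ∀ i, Function.Injective (v i))
    (f : Finset A → A → A)
    (hf : ∀ (R : Finset A), ∀ i ∈ R, f R i ∈ R ∧ ∀ h ∈ R, v i h ≤ v i (f R i))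
    (ubar : A → ℝ) (hubar : ubar = fun i => v i i) :
    ∀ r : ℕ, ∀ i ∈ cycleAgents f (Rset f r), ∀ m : ℕ,
      2 * (r + 1) - 1 ≤ m →
      (HT v)^[m] ubar i = v i (f (Rset f r) i) := by
  subst hubar
  intro r
  induction r using Nat.strong_induction_on with
  | _ r IH =>
  classical
  -- Upper bound, valid from iteration 2*r on
  have hub : ∀ m, 2 * r ≤ m → ∀ j ∈ cycleAgents f (Rset f r),
      (HT v)^[m] (fun i => v i i) j ≤ v j (f (Rset f r) j) := by
    intro m hm j hj
    have hjR : j ∈ Rset f r := cycleAgents_subset f _ hj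
    cases m with
    | zero => simpa using (hf (Rset f r) j hjR).2 j hjR
    | succ m' =>
      rw [Function.iterate_succ_apply']
      set u := (HT v)^[m'] (fun i => v i i) with hu
      refine csSup_le ⟨v j j, self_mem_HBset v u j⟩ ?_
      rintro x ⟨σ, rfl, hσ⟩
      have key : ∀ s, s < r →
          (∀ k ∈ (cycleAgents f (Rset f s)).filter (fun k => σ k ≠ k ∧ k ≠ j),
            σ k = f (Rset f s) k) ∧
          Finset.image (⇑σ) ((cycleAgents f (Rset f s)).filter (fun k => σ k ≠ k ∧ k ≠ j))
            = (cycleAgents f (Rset f s)).filter (fun k => σ k ≠ k ∧ k ≠ j) := by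
        intro s
        induction s using Nat.strong_induction_on with
        | _ s ihs =>
        intro hsr
        have parta : ∀ k ∈ (cycleAgents f (Rset f s)).filter (fun k => σ k ≠ k ∧ k ≠ j),
            σ k = f (Rset f s) k := by
          intro k hk
          rw [Finset.mem_filter] at hk
          obtain ⟨hkC, hkmov, hkj⟩ := hk
          have hks : k ∈ Rset f s := cycleAgents_subset f _ hkC
          have hueq : u k = v k (f (Rset f s) k) := IH s hsr k hkC m' (by omega)
          have hcons : u k ≤ v k (σ k) := hσ k hkj hkmov
          have hσk_mem : σ k ∈ Rset f s := by
            by_contra hnot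
            obtain ⟨s', hs', hmem⟩ := not_mem_Rset f hnot
            have hσkmov : σ (σ k) ≠ σ k := fun h => hkmov (σ.injective h)
            have hσkj : σ k ≠ j := by
              intro h
              rw [h] at hmem
              exact absurd (cycle_rounds_eq f hmem hj) (by omega)
            have hσkM : σ k ∈ (cycleAgents f (Rset f s')).filter
                (fun k => σ k ≠ k ∧ k ≠ j) :=
              Finset.mem_filter.mpr ⟨hmem, hσkmov, hσkj⟩
            rw [← (ihs s' hs' (hs'.trans hsr)).2] at hσkM
            obtain ⟨k'', hk'', hkeq⟩ := Finset.mem_image.mp hσkM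
            have hkk : k'' = k := σ.injective hkeq
            subst hkk
            rw [Finset.mem_filter] at hk''
            exact absurd (cycle_rounds_eq f hk''.1 hkC) (by omega)
          have hle : v k (σ k) ≤ v k (f (Rset f s) k) := (hf (Rset f s) k hks).2 _ hσk_mem
          exact hinj k (le_antisymm hle (hueq ▸ hcons))
        refine ⟨parta, ?_⟩
        refine Finset.eq_of_subset_of_card_le ?_
          (le_of_eq (Finset.card_image_of_injective _ σ.injective).symm)
        intro y hy
        obtain ⟨k, hk, rfl⟩ := Finset.mem_image.mp hy
        have hka := parta k hk
        rw [Finset.mem_filter] at hk ⊢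
        obtain ⟨hkC, hkmov, hkj⟩ := hk
        have hfkC : f (Rset f s) k ∈ cycleAgents f (Rset f s) :=
          cycleAgents_closed (fun i hi => (hf _ i hi).1) hkC
        refine ⟨hka ▸ hfkC, fun h => hkmov (σ.injective h), ?_⟩
        intro h
        rw [hka] at h
        rw [h] at hfkC
        exact absurd (cycle_rounds_eq f hfkC hj) (by omega)
      by_cases hσj : σ j = j
      · rw [hσj]; exact (hf (Rset f r) j hjR).2 j hjR
      · have hσjR : σ j ∈ Rset f r := by
          by_contra hnot
          obtain ⟨s', hs', hmem⟩ := not_mem_Rset f hnot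
          have hσjM : σ j ∈ (cycleAgents f (Rset f s')).filter
              (fun k => σ k ≠ k ∧ k ≠ j) :=
            Finset.mem_filter.mpr ⟨hmem, fun h => hσj (σ.injective h), hσj⟩
          rw [← (key s' hs').2] at hσjM
          obtain ⟨k'', hk'', hkeq⟩ := Finset.mem_image.mp hσjM
          have hkk : k'' = j := σ.injective hkeq
          subst hkk
          rw [Finset.mem_filter] at hk''
          exact hk''.2.2 rfl
        exact (hf (Rset f r) j hjR).2 _ hσjR
  -- Now the equality
  intro i hi m hm
  refine le_antisymm (hub m (by omega) i hi) ?_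
  obtain ⟨m', rfl⟩ : ∃ m', m = m' + 1 := ⟨m - 1, by omega⟩
  rw [Function.iterate_succ_apply']
  set u := (HT v)^[m'] (fun i => v i i) with hu
  refine le_csSup (HBset_bddAbove v u i) ?_
  obtain ⟨hiR, n, hn, hcyc⟩ := (mem_cycleAgents_iff f _ i).mp hi
  set g := f (Rset f r) with hg
  set O : Finset A := (Finset.range n).image (fun k => g^[k] i) with hO
  have hiO : i ∈ O := Finset.mem_image.mpr ⟨0, Finset.mem_range.mpr hn, rfl⟩
  have hgO : ∀ x ∈ O, g x ∈ O := by
    intro x hx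
    obtain ⟨k, hk, rfl⟩ := Finset.mem_image.mp hx
    rw [Finset.mem_range] at hk
    by_cases hkn : k + 1 = n
    · have h1 : g (g^[k] i) = i := by
        rw [← Function.iterate_succ_apply' g k i]
        have h2 : k.succ = n := hkn
        rw [h2, hcyc]
      rw [h1]; exact hiO
    · exact Finset.mem_image.mpr ⟨k + 1, Finset.mem_range.mpr (by omega),
        Function.iterate_succ_apply' g k i⟩
  have himg : Finset.image g O = O := by
    refine Finset.Subset.antisymm ?_ ?_
    · intro y hy
      obtain ⟨x, hx, rfl⟩ := Finset.mem_image.mp hy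
      exact hgO x hx
    · intro y hy
      obtain ⟨k, hk, rfl⟩ := Finset.mem_image.mp hy
      rw [Finset.mem_range] at hk
      cases k with
      | zero =>
        refine Finset.mem_image.mpr ⟨g^[n-1] i,
          Finset.mem_image.mpr ⟨n - 1, Finset.mem_range.mpr (by omega), rfl⟩, ?_⟩
        rw [← Function.iterate_succ_apply' g (n-1) i]
        have h2 : (n-1).succ = n := by omega
        rw [h2, hcyc, Function.iterate_zero_apply]
      | succ k' =>
        exact Finset.mem_image.mpr ⟨g^[k'] i,
          Finset.mem_image.mpr ⟨k', Finset.mem_range.mpr (by omega), rfl⟩,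
          (Function.iterate_succ_apply' g k' i).symm⟩
  have hinjO : Set.InjOn g ↑O := Finset.injOn_of_card_image_eq (by rw [himg])
  set p : A → A := fun x => if x ∈ O then g x else x with hp
  have hpinj : Function.Injective p := by
    intro a b hab
    simp only [hp] at hab
    by_cases ha : a ∈ O <;> by_cases hb : b ∈ O
    · rw [if_pos ha, if_pos hb] at hab; exact hinjO ha hb hab
    · rw [if_pos ha, if_neg hb] at hab; exact absurd (hab ▸ hgO a ha) hb
    · rw [if_neg ha, if_pos hb] at hab; exact absurd (hab.symm ▸ hgO b hb) ha
    · rw [if_neg ha, if_neg hb] at hab; exact hab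
  let σ : Equiv.Perm A := Equiv.ofBijective p ((Finite.injective_iff_bijective).mp hpinj)
  have hσapp : ∀ x, σ x = p x := fun x => rfl
  refine ⟨σ, ?_, ?_⟩
  · rw [hσapp i, hp]
    simp only [if_pos hiO]
  · intro j hji hjmov
    have hjO : j ∈ O := by
      by_contra h
      exact hjmov (by rw [hσapp j, hp]; simp only [if_neg h])
    have hjC : j ∈ cycleAgents f (Rset f r) := by
      obtain ⟨k, hk, rfl⟩ := Finset.mem_image.mp hjO
      rw [mem_cycleAgents_iff]
      refine ⟨iterate_mem_R (fun i hi => (hf _ i hi).1) hiR k, n, hn, ?_⟩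
      rw [← Function.iterate_add_apply, Nat.add_comm n k, Function.iterate_add_apply, hcyc]
    have hσj : σ j = g j := by rw [hσapp j, hp]; simp only [if_pos hjO]
    rw [hσj]
    exact hub m' (by omega) j hjC
end
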